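/- For each i ∈ {1,…,2m} and j ∈ {1,…,n}, there exists a partition I↑(i,j) of the set g↑ ∩ R_ij into pairwise disjoint intervals such that the pointer r↑ is constant on each interval of I↑(i,j), and the number of intervals satisfies |I↑(i,j)| ≤ 4m + 1. -/

import Mathlib

open Set

noncomputable section

/-- The piecewise linear closed curve through the vertices `x 0, x 1, …`:
`f(i+α) = (1-α) • x i + α • x (i+1)`. -/
def fCurve {k : ℕ} (x : ℕ → EuclideanSpace ℝ (Fin k)) (t : ℝ) :
    EuclideanSpace ℝ (Fin k) :=
  (1 - Int.fract t) • x (⌊t⌋.toNat) + Int.fract t • x (⌊t⌋.toNat + 1)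

/-- The extension of the curve from `[0,m]` to `[0,2m]` by `f(u) = f(u-m)` for `u > m`. -/
def fCurveExt {k : ℕ} (m : ℕ) (x : ℕ → EuclideanSpace ℝ (Fin k)) (u : ℝ) :
    EuclideanSpace ℝ (Fin k) :=
  if u ≤ m then fCurve x u else fCurve x (u - m)

/-- The rectangle `D = [0,2m] × [0,n]`. -/
def Dfull (m n : ℕ) : Set (ℝ × ℝ) :=
  Icc (0:ℝ) (2*(m:ℝ)) ×ˢ Icc (0:ℝ) (n:ℝ)

/-- The free space `D_ε = {(u,v) ∈ D : dist (f_X u) (f_Y v) ≤ ε}`. -/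
def Dfree {k : ℕ} (m n : ℕ) (x y : ℕ → EuclideanSpace ℝ (Fin k)) (ε : ℝ) :
    Set (ℝ × ℝ) :=
  {p ∈ Dfull m n | dist (fCurveExt m x p.1) (fCurve y p.2) ≤ ε}

/-- The top side `T = [0,2m] × {n}` of `D`. -/
def Tside (m n : ℕ) : Set (ℝ × ℝ) := Icc (0:ℝ) (2*(m:ℝ)) ×ˢ {(n:ℝ)}

/-- The bottom side `B = [0,2m] × {0}` of `D`. -/
def Bside (m : ℕ) : Set (ℝ × ℝ) := Icc (0:ℝ) (2*(m:ℝ)) ×ˢ {(0:ℝ)}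

/-- A monotone (non-decreasing) path: a connected subset `γ ⊆ Dε` with
`(u-u')·(v-v') ≥ 0` for all `(u,v), (u',v') ∈ γ`. -/
def IsMonPath (Dε γ : Set (ℝ × ℝ)) : Prop :=
  γ ⊆ Dε ∧ IsConnected γ ∧
    ∀ p ∈ γ, ∀ q ∈ γ, (p.1 - q.1) * (p.2 - q.2) ≥ 0

/-- Two points are mutually reachable if some monotone path contains both. -/
def Reach (Dε : Set (ℝ × ℝ)) (p q : ℝ × ℝ) : Prop :=
  ∃ γ : Set (ℝ × ℝ), IsMonPath Dε γ ∧ p ∈ γ ∧ q ∈ γ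

/-- `g↓`: the points of `Dε` mutually reachable with at least one point of `B`. -/
def gDown (m : ℕ) (Dε : Set (ℝ × ℝ)) : Set (ℝ × ℝ) :=
  {p ∈ Dε | ∃ q ∈ Bside m, Reach Dε p q}

/-- `g↑`: the points of `Dε` mutually reachable with at least one point of `T`. -/
def gUp (m n : ℕ) (Dε : Set (ℝ × ℝ)) : Set (ℝ × ℝ) :=
  {p ∈ Dε | ∃ q ∈ Tside m n, Reach Dε p q}

/-- The pointer `r↑(p)`: the maximum `u* ∈ [0,2m]` such that `p` and `(u*, n)`
are mutually reachable. -/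
def rUp (m n : ℕ) (Dε : Set (ℝ × ℝ)) (p : ℝ × ℝ) : ℝ :=
  sSup {u : ℝ | u ∈ Icc (0:ℝ) (2*(m:ℝ)) ∧ Reach Dε p (u, (n:ℝ))}

/-- The pointer `r↓(p)`: for `p` with `p.2 > 0`, the maximum `u* ∈ [0,2m]` such
that `p` and `(u*, 0)` are mutually reachable; on the bottom side `r↓(u,0) = u`. -/
def rDown (m : ℕ) (Dε : Set (ℝ × ℝ)) (p : ℝ × ℝ) : ℝ :=
  if p.2 = 0 then p.1
  else sSup {u : ℝ | u ∈ Icc (0:ℝ) (2*(m:ℝ)) ∧ Reach Dε p (u, (0:ℝ))}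

/-- The cell `D_ij = [i-1,i] × [j-1,j]`. -/
def cellD (i j : ℕ) : Set (ℝ × ℝ) :=
  Icc ((i:ℝ)-1) (i:ℝ) ×ˢ Icc ((j:ℝ)-1) (j:ℝ)

/-- The top side `T_ij` of the cell `D_ij`. -/
def cellT (i j : ℕ) : Set (ℝ × ℝ) := Icc ((i:ℝ)-1) (i:ℝ) ×ˢ {(j:ℝ)}

/-- The bottom side `B_ij` of the cell `D_ij`. -/
def cellB (i j : ℕ) : Set (ℝ × ℝ) := Icc ((i:ℝ)-1) (i:ℝ) ×ˢ {((j:ℝ)-1)}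

/-- The right side `R_ij` of the cell `D_ij`. -/
def cellR (i j : ℕ) : Set (ℝ × ℝ) := {(i:ℝ)} ×ˢ Icc ((j:ℝ)-1) (j:ℝ)

/-- The left side `L_ij` of the cell `D_ij`. -/
def cellL (i j : ℕ) : Set (ℝ × ℝ) := {((i:ℝ)-1)} ×ˢ Icc ((j:ℝ)-1) (j:ℝ)

/-- The partial order `≼` on `D`: `(u1,v1) ≼ (u2,v2)` iff `u1 ≤ u2` and `v1 ≥ v2`. -/
def prec (p q : ℝ × ℝ) : Prop := p.1 ≤ q.1 ∧ q.2 ≤ p.2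

/-!
On the right side `R_ij` the free space is an interval, because `f_Y` is affine on `[j-1, j]`;
likewise the free part of the top side of each cell `D_{c,n}` is a closed interval, because `f_X`
(extended periodically, with `x m = x 0` at the seam) is affine on `[c-1, c]`. A monotone path
reaching the top side can be prolonged rightwards along it to the right end of the free interval
of its cell, so `r↑` takes at most `2m` values, the right ends of these intervals. A point of
`R_ij` below a point of `g↑ ∩ R_ij` reaches the top by first going up `R_ij`, so `g↑ ∩ R_ij` is an
interval on which `r↑` is non-increasing, and the level sets of `r↑` partition it into at most
`2m` intervals.
-/

lemma exists_ordConnected_partition_of_antitoneOn {α β : Type*} [Preorder α] [PartialOrder β]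
    {S : Set α} {f : α → β} {V : Finset β} (hS : S.OrdConnected) (hf : AntitoneOn f S)
    (hV : MapsTo f S V) :
    ∃ I : Finset (Set α), (∀ s ∈ I, s.OrdConnected) ∧ (I : Set (Set α)).PairwiseDisjoint id ∧
      ⋃₀ (I : Set (Set α)) = S ∧ (∀ s ∈ I, ∃ c, ∀ a ∈ s, f a = c) ∧ I.card ≤ V.card := by
  classical
  refine ⟨V.image fun b => S ∩ f ⁻¹' {b}, ?_, ?_, ?_, ?_, Finset.card_image_le⟩
  · simp only [Finset.mem_image]
    rintro _ ⟨b, -, rfl⟩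
    refine ⟨fun a₁ h₁ a₃ h₃ a ha => ?_⟩
    have haS := hS.out h₁.1 h₃.1 ha
    exact ⟨haS, le_antisymm (h₁.2 ▸ hf h₁.1 haS ha.1) (h₃.2 ▸ hf haS h₃.1 ha.2)⟩
  · simp only [Finset.coe_image]
    rintro _ ⟨b, -, rfl⟩ _ ⟨b', -, rfl⟩ hne
    refine Set.disjoint_left.2 fun a ha ha' => hne ?_
    rw [show b = b' from ha.2.symm.trans ha'.2]
  · ext a
    simp only [mem_sUnion, Finset.coe_image, mem_image, Finset.mem_coe]
    refine ⟨?_, fun ha => ⟨_, ⟨f a, hV ha, rfl⟩, ha, rfl⟩⟩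
    rintro ⟨_, ⟨b, -, rfl⟩, ha⟩
    exact ha.1
  · simp only [Finset.mem_image]
    rintro _ ⟨b, -, rfl⟩
    exact ⟨b, fun a ha => ha.2⟩

section AffineSegment

variable {E : Type*} [NormedAddCommGroup E] [NormedSpace ℝ E] {f : ℝ → E} {a b ε : ℝ} {A B P : E}

lemma Icc_inter_dist_le_eq_of_eq_lineMap
    (hf : ∀ t ∈ Icc a b, f t = AffineMap.lineMap A B (t - a)) :
    Icc a b ∩ {t | dist (f t) P ≤ ε} =
      Icc a b ∩ (fun t => -a + t) ⁻¹' (AffineMap.lineMap A B ⁻¹' Metric.closedBall P ε) := by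
  ext t
  simp +contextual [hf, neg_add_eq_sub]

lemma ordConnected_Icc_inter_dist_le (hf : ∀ t ∈ Icc a b, f t = AffineMap.lineMap A B (t - a)) :
    (Icc a b ∩ {t | dist (f t) P ≤ ε}).OrdConnected := by
  rw [Icc_inter_dist_le_eq_of_eq_lineMap hf, ← convex_iff_ordConnected]
  exact (convex_Icc a b).inter
    (((convex_closedBall P ε).affine_preimage _).translate_preimage_right _)

lemma isClosed_Icc_inter_dist_le (hf : ∀ t ∈ Icc a b, f t = AffineMap.lineMap A B (t - a)) :
    IsClosed (Icc a b ∩ {t | dist (f t) P ≤ ε}) := by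
  rw [Icc_inter_dist_le_eq_of_eq_lineMap hf]
  exact isClosed_Icc.inter (Metric.isClosed_closedBall.preimage
    (AffineMap.lineMap_continuous.comp (continuous_const_add _)))

end AffineSegment

section Curve

variable {k : ℕ}

lemma fCurve_eq_lineMap (z : ℕ → EuclideanSpace ℝ (Fin k)) {j : ℕ} (hj : 1 ≤ j) {t : ℝ}
    (ht : t ∈ Icc ((j:ℝ) - 1) j) :
    fCurve z t = AffineMap.lineMap (z (j - 1)) (z j) (t - ((j:ℝ) - 1)) := by
  rw [AffineMap.lineMap_apply_module]
  rcases ht.2.eq_or_lt with rfl | htj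
  · simp [fCurve]
  · have hfloor : ⌊t⌋ = (j:ℤ) - 1 := by
      rw [Int.floor_eq_iff]; push_cast; constructor <;> linarith [ht.1]
    have hfract : Int.fract t = t - ((j:ℝ) - 1) := by
      rw [Int.fract, hfloor]; push_cast; ring
    have htoNat : (⌊t⌋).toNat = j - 1 := by omega
    rw [fCurve, hfract, htoNat, Nat.sub_add_cancel hj]

lemma fCurveExt_eq_lineMap {m : ℕ} {x : ℕ → EuclideanSpace ℝ (Fin k)} (hx : x m = x 0)
    {c : ℕ} (hc : 1 ≤ c) :
    ∃ A B : EuclideanSpace ℝ (Fin k), ∀ u ∈ Icc ((c:ℝ) - 1) c,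
      fCurveExt m x u = AffineMap.lineMap A B (u - ((c:ℝ) - 1)) := by
  by_cases hcm : c ≤ m
  · refine ⟨x (c - 1), x c, fun u hu => ?_⟩
    rw [fCurveExt, if_pos (hu.2.trans (by exact_mod_cast hcm)), fCurve_eq_lineMap x hc hu]
  refine ⟨x (c - m - 1), x (c - m), fun u hu => ?_⟩
  have hcast : ((c - m : ℕ) : ℝ) = c - m := by push_cast [Nat.cast_sub (by omega : m ≤ c)]; ring
  by_cases hum : u ≤ m
  · -- `u = m`, the seam between the two copies of `X`
    have hc' : c = m + 1 := by
      have : (c:ℝ) ≤ m + 1 := by linarith [hu.1]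
      have : c ≤ m + 1 := by exact_mod_cast this
      omega
    subst hc'
    have hu' : u = m := by push_cast at hu; linarith [hu.1]
    subst hu'
    simp [fCurveExt, fCurve, hx]
  · rw [fCurveExt, if_neg hum, fCurve_eq_lineMap x (by omega : 1 ≤ c - m)
      (by rw [hcast]; constructor <;> linarith [hu.1, hu.2]), hcast]
    congr 1
    ring

end Curve

namespace IsMonPath

variable {Dε γ γ' : Set (ℝ × ℝ)}

lemma le_or_le (h : IsMonPath Dε γ) {p q : ℝ × ℝ} (hp : p ∈ γ) (hq : q ∈ γ) :
    p ≤ q ∨ q ≤ p := by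
  have hpq := h.2.2 p hp q hq
  rcases le_total p.1 q.1 with h1 | h1 <;> rcases le_total p.2 q.2 with h2 | h2
  · exact Or.inl ⟨h1, h2⟩
  · rcases h1.eq_or_lt with h1 | h1
    · exact Or.inr ⟨h1.ge, h2⟩
    · exact Or.inl ⟨h1.le, by nlinarith⟩
  · rcases h1.eq_or_lt with h1 | h1
    · exact Or.inl ⟨h1.ge, h2⟩
    · exact Or.inr ⟨h1.le, by nlinarith⟩
  · exact Or.inr ⟨h1, h2⟩

lemma eq_of_add_eq (h : IsMonPath Dε γ) {p q : ℝ × ℝ} (hp : p ∈ γ) (hq : q ∈ γ)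
    (hs : p.1 + p.2 = q.1 + q.2) : p = q := by
  have hpq := h.2.2 p hp q hq
  have h2 : p.2 = q.2 := by nlinarith
  exact Prod.ext (by linarith) h2

/-- On a monotone path `q ↦ q.1 + q.2` is injective, so clamping the path to `c` from below is
continuous; its image is the part of the path above `c`. -/
lemma inter_Ici (h : IsMonPath Dε γ) {c : ℝ × ℝ} (hc : c ∈ γ) : IsMonPath Dε (γ ∩ Ici c) := by
  refine ⟨inter_subset_left.trans h.1, ⟨⟨c, hc, self_mem_Ici⟩, ?_⟩,
    fun p hp q hq => h.2.2 p hp.1 q hq.1⟩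
  have : PreconnectedSpace γ := Subtype.preconnectedSpace h.2.1.isPreconnected
  let clamp : γ → ℝ × ℝ := fun q => if c.1 + c.2 ≤ q.1.1 + q.1.2 then q else c
  have hclamp : Continuous clamp :=
    Continuous.if_le continuous_subtype_val continuous_const continuous_const (by fun_prop)
      fun q hq => (h.eq_of_add_eq hc q.2 hq).symm
  have hrange : range clamp = γ ∩ Ici c := by
    refine Subset.antisymm ?_ fun p hp => ⟨⟨p, hp.1⟩, if_pos (add_le_add hp.2.1 hp.2.2)⟩
    rintro _ ⟨q, rfl⟩
    by_cases hle : c.1 + c.2 ≤ q.1.1 + q.1.2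
    · simp only [clamp, if_pos hle]
      refine ⟨q.2, (h.le_or_le hc q.2).elim id fun hqc => ?_⟩
      rw [h.eq_of_add_eq q.2 hc (le_antisymm (add_le_add hqc.1 hqc.2) hle)]
      exact self_mem_Ici
    · simp only [clamp, if_neg hle]
      exact ⟨hc, self_mem_Ici⟩
  exact hrange ▸ isPreconnected_range hclamp

lemma union (h : IsMonPath Dε γ) (h' : IsMonPath Dε γ') (hne : (γ ∩ γ').Nonempty)
    (hcross : ∀ p ∈ γ, ∀ q ∈ γ', (p.1 - q.1) * (p.2 - q.2) ≥ 0) :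
    IsMonPath Dε (γ ∪ γ') := by
  refine ⟨union_subset h.1 h'.1, IsConnected.union hne h.2.1 h'.2.1, ?_⟩
  rintro p (hp | hp) q (hq | hq)
  · exact h.2.2 p hp q hq
  · exact hcross p hp q hq
  · nlinarith [hcross q hq p hp]
  · exact h'.2.2 p hp q hq

end IsMonPath

section Segments

variable {Dε : Set (ℝ × ℝ)}

lemma isMonPath_singleton_prod_Icc {w a b : ℝ} (hab : a ≤ b) (hsub : {w} ×ˢ Icc a b ⊆ Dε) :
    IsMonPath Dε ({w} ×ˢ Icc a b) := by
  refine ⟨hsub, isConnected_singleton.prod (isConnected_Icc hab), ?_⟩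
  rintro p ⟨hp, -⟩ q ⟨hq, -⟩
  simp [mem_singleton_iff.1 hp, mem_singleton_iff.1 hq]

lemma isMonPath_Icc_prod_singleton {a b h : ℝ} (hab : a ≤ b) (hsub : Icc a b ×ˢ {h} ⊆ Dε) :
    IsMonPath Dε (Icc a b ×ˢ {h}) := by
  refine ⟨hsub, (isConnected_Icc hab).prod isConnected_singleton, ?_⟩
  rintro p ⟨-, hp⟩ q ⟨-, hq⟩
  simp [mem_singleton_iff.1 hp, mem_singleton_iff.1 hq]

lemma reach_of_singleton_prod_Icc_subset {w v v' : ℝ} (hvv' : v ≤ v')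
    (hseg : {w} ×ˢ Icc v v' ⊆ Dε) : Reach Dε (w, v) (w, v') :=
  ⟨_, isMonPath_singleton_prod_Icc hvv' hseg, ⟨rfl, le_rfl, hvv'⟩, ⟨rfl, hvv', le_rfl⟩⟩

namespace Reach

variable {p q : ℝ × ℝ}

lemma mem_left (hr : Reach Dε p q) : p ∈ Dε :=
  let ⟨_, hγ, hp, _⟩ := hr; hγ.1 hp

lemma mem_right (hr : Reach Dε p q) : q ∈ Dε :=
  let ⟨_, hγ, _, hq⟩ := hr; hγ.1 hq

lemma le_or_le (hr : Reach Dε p q) : p ≤ q ∨ q ≤ p :=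
  let ⟨_, hγ, hp, hq⟩ := hr; hγ.le_or_le hp hq

/-- The union stays monotone since every point of the path is below `(a, h)` or on the top row. -/
lemma extend_top {h a b : ℝ} (htop : ∀ q ∈ Dε, q.2 ≤ h) (hr : Reach Dε p (a, h))
    (hab : a ≤ b) (hseg : Icc a b ×ˢ {h} ⊆ Dε) : Reach Dε p (b, h) := by
  obtain ⟨γ, hγ, hp, ha⟩ := hr
  have hcross : ∀ q ∈ γ, ∀ r ∈ Icc a b ×ˢ {h}, (q.1 - r.1) * (q.2 - r.2) ≥ 0 := by
    rintro q hq r ⟨hr1, hr2⟩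
    rw [mem_singleton_iff.1 hr2]
    rcases hγ.le_or_le hq ha with hqa | haq
    · exact mul_nonneg_of_nonpos_of_nonpos (by linarith [hqa.1, hr1.1]) (by linarith [hqa.2])
    · simp [le_antisymm (htop q (hγ.1 hq)) haq.2]
  exact ⟨_, hγ.union (isMonPath_Icc_prod_singleton hab hseg) ⟨(a, h), ha, ⟨le_rfl, hab⟩, rfl⟩
    hcross, Or.inl hp, Or.inr ⟨⟨hab, le_rfl⟩, rfl⟩⟩

lemma of_singleton_prod_Icc_subset {w v v' : ℝ} (hr : Reach Dε (w, v') q) (hq : (w, v') ≤ q)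
    (hvv' : v ≤ v') (hseg : {w} ×ˢ Icc v v' ⊆ Dε) : Reach Dε (w, v) q := by
  obtain ⟨γ, hγ, hw, hqγ⟩ := hr
  have hcross : ∀ r ∈ {w} ×ˢ Icc v v', ∀ s ∈ γ ∩ Ici (w, v'),
      (r.1 - s.1) * (r.2 - s.2) ≥ 0 := by
    rintro r ⟨hr1, hr2⟩ s ⟨-, hs⟩
    rw [mem_singleton_iff.1 hr1]
    exact mul_nonneg_of_nonpos_of_nonpos (by linarith [hs.1]) (by linarith [hr2.2, hs.2])
  exact ⟨_, (isMonPath_singleton_prod_Icc hvv' hseg).union (hγ.inter_Ici hw)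
    ⟨(w, v'), ⟨rfl, hvv', le_rfl⟩, hw, self_mem_Ici⟩ hcross,
    Or.inl ⟨rfl, le_rfl, hvv'⟩, Or.inr ⟨hqγ, hq⟩⟩

end Reach

end Segments

/-- `r↑(p)` is the supremum of this set. -/
def reachTop (m n : ℕ) (Dε : Set (ℝ × ℝ)) (p : ℝ × ℝ) : Set ℝ :=
  {u | u ∈ Icc (0:ℝ) (2*(m:ℝ)) ∧ Reach Dε p (u, (n:ℝ))}

def cellTopFree (n : ℕ) (Dε : Set (ℝ × ℝ)) (c : ℕ) : Set ℝ :=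
  {u | (u, (n:ℝ)) ∈ cellT c n ∩ Dε}

lemma exists_nat_mem_Icc_sub_one {m : ℕ} (hm : 1 ≤ m) {u : ℝ} (hu : u ∈ Icc (0:ℝ) (2*(m:ℝ))) :
    ∃ c ∈ Finset.Icc 1 (2*m), u ∈ Icc ((c:ℝ) - 1) c := by
  refine ⟨max 1 ⌈u⌉₊, Finset.mem_Icc.2 ⟨le_max_left _ _, max_le (by omega) ?_⟩, ?_, ?_⟩
  · exact Nat.ceil_le.2 (by exact_mod_cast hu.2)
  · have := Nat.ceil_lt_add_one hu.1
    simp only [Nat.cast_max, Nat.cast_one, sub_le_iff_le_add, max_le_iff]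
    constructor <;> linarith [hu.1]
  · rw [Nat.cast_max]
    exact le_max_of_le_right (Nat.le_ceil u)

section Reachability

variable {m n : ℕ} {Dε : Set (ℝ × ℝ)}

lemma bddAbove_reachTop (p : ℝ × ℝ) : BddAbove (reachTop m n Dε p) :=
  ⟨2*(m:ℝ), fun _ hu => hu.1.2⟩

lemma sSup_cellTopFree_mem_reachTop (hD : Dε ⊆ Dfull m n) {c : ℕ}
    (hc : (cellTopFree n Dε c).OrdConnected) (hc' : IsClosed (cellTopFree n Dε c))
    {p : ℝ × ℝ} {u : ℝ} (hu : u ∈ reachTop m n Dε p) (huc : u ∈ Icc ((c:ℝ) - 1) c) :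
    sSup (cellTopFree n Dε c) ∈ reachTop m n Dε p ∧ u ≤ sSup (cellTopFree n Dε c) := by
  have huT : u ∈ cellTopFree n Dε c := ⟨⟨huc, rfl⟩, hu.2.mem_right⟩
  have hbdd : BddAbove (cellTopFree n Dε c) := ⟨c, fun _ ht => ht.1.1.2⟩
  have hsT := hc'.csSup_mem ⟨u, huT⟩ hbdd
  have hus := le_csSup hbdd huT
  refine ⟨⟨(hD hsT.2).1, hu.2.extend_top (fun q hq => (hD hq).2.2) hus ?_⟩, hus⟩
  rintro ⟨t, s⟩ ⟨ht, hs⟩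
  obtain rfl : s = n := hs
  exact (hc.out huT hsT ht).2

lemma exists_rUp_eq_sSup_cellTopFree (hm : 1 ≤ m) (hD : Dε ⊆ Dfull m n)
    (hconn : ∀ c ∈ Finset.Icc 1 (2*m), (cellTopFree n Dε c).OrdConnected)
    (hclosed : ∀ c ∈ Finset.Icc 1 (2*m), IsClosed (cellTopFree n Dε c))
    {p : ℝ × ℝ} (hp : (reachTop m n Dε p).Nonempty) :
    ∃ c ∈ Finset.Icc 1 (2*m), rUp m n Dε p = sSup (cellTopFree n Dε c) := by
  classical
  have hext : ∀ c ∈ Finset.Icc 1 (2*m), ∀ u ∈ reachTop m n Dε p, u ∈ Icc ((c:ℝ) - 1) c →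
      sSup (cellTopFree n Dε c) ∈ reachTop m n Dε p ∧ u ≤ sSup (cellTopFree n Dε c) :=
    fun c hc _ hu huc => sSup_cellTopFree_mem_reachTop hD (hconn c hc) (hclosed c hc) hu huc
  let C := (Finset.Icc 1 (2*m)).filter fun c : ℕ => ∃ u ∈ reachTop m n Dε p, u ∈ Icc ((c:ℝ) - 1) c
  have hC : C.Nonempty := by
    obtain ⟨u, hu⟩ := hp
    obtain ⟨c, hc, huc⟩ := exists_nat_mem_Icc_sub_one hm hu.1
    exact ⟨c, Finset.mem_filter.2 ⟨hc, u, hu, huc⟩⟩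
  -- among the top cells containing a reachable point, one whose free part reaches farthest right
  obtain ⟨c, hcC, hmax⟩ := C.exists_max_image (fun c => sSup (cellTopFree n Dε c)) hC
  obtain ⟨hc, u, hu, huc⟩ := Finset.mem_filter.1 hcC
  refine ⟨c, hc, le_antisymm (csSup_le hp fun u' hu' => ?_)
    (le_csSup (bddAbove_reachTop p) (hext c hc u hu huc).1)⟩
  obtain ⟨c', hc', hu'c'⟩ := exists_nat_mem_Icc_sub_one hm hu'.1
  exact (hext c' hc' u' hu' hu'c').2.trans (hmax c' (Finset.mem_filter.2 ⟨hc', u', hu', hu'c'⟩))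

lemma exists_le_mem_reachTop_of_singleton_prod_Icc_subset (hD : Dε ⊆ Dfull m n) {w v v' u' : ℝ}
    (hvv' : v ≤ v') (hseg : {w} ×ˢ Icc v v' ⊆ Dε) (hu' : u' ∈ reachTop m n Dε (w, v')) :
    ∃ u ∈ reachTop m n Dε (w, v), u' ≤ u := by
  rcases hu'.2.le_or_le with h | h
  · exact ⟨u', ⟨hu'.1, hu'.2.of_singleton_prod_Icc_subset h hvv' hseg⟩, le_rfl⟩
  · have hw := hD hu'.2.mem_left
    have hv' : v' = n := le_antisymm hw.2.2 h.2
    exact ⟨w, ⟨hw.1, hv' ▸ reach_of_singleton_prod_Icc_subset hvv' hseg⟩, h.1⟩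

end Reachability

section RightSide

variable {m n : ℕ} {Dε : Set (ℝ × ℝ)} {i j : ℕ}

lemma mem_gUp_inter_cellR_iff {v : ℝ} :
    ((i:ℝ), v) ∈ gUp m n Dε ∩ cellR i j ↔
      v ∈ Icc ((j:ℝ) - 1) j ∧ (reachTop m n Dε ((i:ℝ), v)).Nonempty := by
  constructor
  · rintro ⟨⟨-, ⟨u, s⟩, ⟨hu, hs⟩, hr⟩, -, hv⟩
    obtain rfl : s = n := hs
    exact ⟨hv, u, hu, hr⟩
  · rintro ⟨hv, u, hu, hr⟩
    exact ⟨⟨hr.mem_left, (u, n), ⟨hu, rfl⟩, hr⟩, rfl, hv⟩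

variable (hD : Dε ⊆ Dfull m n) (hV : {v ∈ Icc ((j:ℝ) - 1) j | ((i:ℝ), v) ∈ Dε}.OrdConnected)
include hV

lemma singleton_prod_Icc_subset_of_mem_gUp_inter_cellR {v v' : ℝ}
    (hv : ((i:ℝ), v) ∈ gUp m n Dε ∩ cellR i j) (hv' : ((i:ℝ), v') ∈ gUp m n Dε ∩ cellR i j) :
    {(i:ℝ)} ×ˢ Icc v v' ⊆ Dε := by
  rintro ⟨w, t⟩ ⟨hw, ht⟩
  obtain rfl : w = i := hw
  exact (hV.out ⟨hv.2.2, hv.1.1⟩ ⟨hv'.2.2, hv'.1.1⟩ ht).2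

include hD

lemma ordConnected_gUp_inter_cellR :
    {v : ℝ | ((i:ℝ), v) ∈ gUp m n Dε ∩ cellR i j}.OrdConnected := by
  refine ⟨fun v₁ h₁ v₃ h₃ v hv => ?_⟩
  have hseg : {(i:ℝ)} ×ˢ Icc v v₃ ⊆ Dε :=
    (prod_mono_right (Icc_subset_Icc_left hv.1)).trans
      (singleton_prod_Icc_subset_of_mem_gUp_inter_cellR hV h₁ h₃)
  obtain ⟨hv₁, -⟩ := mem_gUp_inter_cellR_iff.1 h₁
  obtain ⟨hv₃, u', hu'⟩ := mem_gUp_inter_cellR_iff.1 h₃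
  obtain ⟨u, hu, -⟩ := exists_le_mem_reachTop_of_singleton_prod_Icc_subset hD hv.2 hseg hu'
  exact mem_gUp_inter_cellR_iff.2 ⟨⟨hv₁.1.trans hv.1, hv.2.trans hv₃.2⟩, u, hu⟩

lemma antitoneOn_rUp_gUp_inter_cellR :
    AntitoneOn (fun v => rUp m n Dε ((i:ℝ), v)) {v | ((i:ℝ), v) ∈ gUp m n Dε ∩ cellR i j} := by
  intro v hv v' hv' hvv'
  refine csSup_le (mem_gUp_inter_cellR_iff.1 hv').2 fun u' hu' => ?_
  obtain ⟨u, hu, hu'u⟩ := exists_le_mem_reachTop_of_singleton_prod_Icc_subset hD hvv'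
    (singleton_prod_Icc_subset_of_mem_gUp_inter_cellR hV hv hv') hu'
  exact hu'u.trans (le_csSup (bddAbove_reachTop _) hu)

end RightSide

section FreeSpace

variable {k m n : ℕ} {x y : ℕ → EuclideanSpace ℝ (Fin k)} {ε : ℝ}

lemma ordConnected_Dfree_slice {j : ℕ} (hj : 1 ≤ j) (w : ℝ) :
    {v ∈ Icc ((j:ℝ) - 1) j | (w, v) ∈ Dfree m n x y ε}.OrdConnected := by
  refine ⟨fun v₁ h₁ v₃ h₃ v hv => ?_⟩
  have hdist := (ordConnected_Icc_inter_dist_le (P := fCurveExt m x w) (ε := ε)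
    fun t ht => fCurve_eq_lineMap y hj ht).out
    ⟨h₁.1, (dist_comm _ _).trans_le h₁.2.2⟩ ⟨h₃.1, (dist_comm _ _).trans_le h₃.2.2⟩ hv
  exact ⟨hdist.1, ⟨h₁.2.1.1, h₁.2.1.2.1.trans hv.1, hv.2.trans h₃.2.1.2.2⟩,
    (dist_comm _ _).trans_le hdist.2⟩

lemma cellTopFree_Dfree {c : ℕ} (hc : 1 ≤ c) (hc' : c ≤ 2*m) :
    cellTopFree n (Dfree m n x y ε) c =
      Icc ((c:ℝ) - 1) c ∩ {u | dist (fCurveExt m x u) (fCurve y n) ≤ ε} := by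
  have h1 : (1:ℝ) ≤ c := by exact_mod_cast hc
  have h2 : (c:ℝ) ≤ 2*m := by exact_mod_cast hc'
  ext u
  constructor
  · rintro ⟨⟨hu, -⟩, -, hd⟩
    exact ⟨hu, hd⟩
  · rintro ⟨hu, hd⟩
    exact ⟨⟨hu, rfl⟩, ⟨⟨by linarith [hu.1], by linarith [hu.2]⟩, by positivity, le_rfl⟩, hd⟩

lemma ordConnected_cellTopFree_Dfree (hx : x m = x 0) {c : ℕ} (hc : 1 ≤ c) (hc' : c ≤ 2*m) :
    (cellTopFree n (Dfree m n x y ε) c).OrdConnected := by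
  obtain ⟨A, B, hAB⟩ := fCurveExt_eq_lineMap hx hc
  rw [cellTopFree_Dfree hc hc']
  exact ordConnected_Icc_inter_dist_le hAB

lemma isClosed_cellTopFree_Dfree (hx : x m = x 0) {c : ℕ} (hc : 1 ≤ c) (hc' : c ≤ 2*m) :
    IsClosed (cellTopFree n (Dfree m n x y ε) c) := by
  obtain ⟨A, B, hAB⟩ := fCurveExt_eq_lineMap hx hc
  rw [cellTopFree_Dfree hc hc']
  exact isClosed_Icc_inter_dist_le hAB

end FreeSpace

theorem stmt17_general
    (k m n : ℕ) (hm : 1 ≤ m)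
    (x y : ℕ → EuclideanSpace ℝ (Fin k)) (hx : x m = x 0)
    (ε : ℝ)
    (Dε : Set (ℝ × ℝ)) (hDε : Dε = Dfree m n x y ε)
    (i j : ℕ) (hj1 : 1 ≤ j) :
    ∃ I : Finset (Set ℝ),
      (∀ s ∈ I, s.OrdConnected) ∧
      (I : Set (Set ℝ)).PairwiseDisjoint id ∧
      ⋃₀ (I : Set (Set ℝ)) = {v : ℝ | ((i:ℝ), v) ∈ gUp m n Dε ∩ cellR i j} ∧
      (∀ s ∈ I, ∃ c : ℝ, ∀ v ∈ s, rUp m n Dε ((i:ℝ), v) = c) ∧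
      I.card ≤ 4*m + 1 := by
  subst hDε
  have hD : Dfree m n x y ε ⊆ Dfull m n := fun _ hp => hp.1
  have hV : {v ∈ Icc ((j:ℝ) - 1) j | ((i:ℝ), v) ∈ Dfree m n x y ε}.OrdConnected :=
    ordConnected_Dfree_slice hj1 _
  let V := (Finset.Icc 1 (2*m)).image fun c => sSup (cellTopFree n (Dfree m n x y ε) c)
  have hrUp : MapsTo (fun v => rUp m n (Dfree m n x y ε) ((i:ℝ), v))
      {v | ((i:ℝ), v) ∈ gUp m n (Dfree m n x y ε) ∩ cellR i j} V := fun v hv => by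
    obtain ⟨c, hc, hrc⟩ := exists_rUp_eq_sSup_cellTopFree hm hD
      (fun c hc => (Finset.mem_Icc.1 hc).elim (ordConnected_cellTopFree_Dfree hx))
      (fun c hc => (Finset.mem_Icc.1 hc).elim (isClosed_cellTopFree_Dfree hx))
      (mem_gUp_inter_cellR_iff.1 hv).2
    exact Finset.mem_image.2 ⟨c, hc, hrc.symm⟩
  obtain ⟨I, hIconn, hIdisj, hIunion, hIconst, hIcard⟩ :=
    exists_ordConnected_partition_of_antitoneOn (ordConnected_gUp_inter_cellR hD hV)
      (antitoneOn_rUp_gUp_inter_cellR hD hV) hrUp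
  refine ⟨I, hIconn, hIdisj, hIunion, hIconst, ?_⟩
  calc I.card ≤ V.card := hIcard
    _ ≤ (Finset.Icc 1 (2*m)).card := Finset.card_image_le
    _ ≤ 4*m + 1 := by rw [Nat.card_Icc]; omega

theorem stmt17
    (k m n : ℕ) (hk : 1 ≤ k) (hm : 1 ≤ m) (hn : 1 ≤ n)
    (x y : ℕ → EuclideanSpace ℝ (Fin k)) (hx : x m = x 0) (hy : y n = y 0)
    (ε : ℝ) (hε : 0 ≤ ε)
    (Dε : Set (ℝ × ℝ)) (hDε : Dε = Dfree m n x y ε)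
    (i j : ℕ) (hi1 : 1 ≤ i) (hi2 : i ≤ 2*m) (hj1 : 1 ≤ j) (hj2 : j ≤ n) :
    ∃ I : Finset (Set ℝ),
      (∀ s ∈ I, s.OrdConnected) ∧
      (I : Set (Set ℝ)).PairwiseDisjoint id ∧
      ⋃₀ (I : Set (Set ℝ)) = {v : ℝ | ((i:ℝ), v) ∈ gUp m n Dε ∩ cellR i j} ∧
      (∀ s ∈ I, ∃ c : ℝ, ∀ v ∈ s, rUp m n Dε ((i:ℝ), v) = c) ∧
      I.card ≤ 4*m + 1 :=
  stmt17_general k m n hm x y hx ε Dε hDε i j hj1
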